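/- Let G be the group with presentation ⟨a, b, x | abx = 1, a⁸ = b⁸ = 1, x² = 1⟩. Then for every surjective group homomorphism φ from G onto the additive group ℤ/8ℤ such that φ(x) has additive order 2, there exists a unit k ∈ (ℤ/8ℤ)ˣ such that (φ(a), φ(b), φ(x)) = (k, 3k, 4k). In particular there are exactly four such homomorphisms, all equivalent up to an automorphism of ℤ/8ℤ. -/

import Mathlib

/-- Relations for `⟨a,b,x ∣ abx = 1, a⁸ = b⁸ = 1, x² = 1⟩`, the orbifold
fundamental group of `S²(2,8,8)`.  Generators: `a = 0`, `b = 1`, `x = 2`. -/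
def relsS288 : Set (FreeGroup (Fin 3)) :=
  {FreeGroup.of 0 * FreeGroup.of 1 * FreeGroup.of 2,
    (FreeGroup.of 0) ^ 8, (FreeGroup.of 1) ^ 8, (FreeGroup.of 2) ^ 2}


lemma relsS288_mk (r : FreeGroup (Fin 3)) (hr : r ∈ relsS288) :
    PresentedGroup.mk relsS288 r = 1 :=
  (QuotientGroup.eq_one_iff r).mpr (Subgroup.subset_normalClosure hr)

lemma rel1 : (PresentedGroup.of 0 * PresentedGroup.of 1 * PresentedGroup.of 2 :
    PresentedGroup relsS288) = 1 := by
  have := relsS288_mk (FreeGroup.of 0 * FreeGroup.of 1 * FreeGroup.of 2)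
    (by simp [relsS288])
  simp only [map_mul] at this; exact this

lemma rel2 : ((PresentedGroup.of 2 : PresentedGroup relsS288)) ^ 2 = 1 := by
  have := relsS288_mk ((FreeGroup.of 2) ^ 2) (by simp [relsS288])
  simp only [map_pow] at this; exact this

noncomputable def fS288 (u : ZMod 8) : Fin 3 → Multiplicative (ZMod 8) :=
  ![Multiplicative.ofAdd u, Multiplicative.ofAdd (4 - u), Multiplicative.ofAdd 4]

lemma fS288_rels (u : ZMod 8) : ∀ r ∈ relsS288, FreeGroup.lift (fS288 u) r = 1 := by
  have h8 : ∀ x : Multiplicative (ZMod 8), x ^ 8 = 1 := by decide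
  have hprod : ∀ v : ZMod 8, Multiplicative.ofAdd v * Multiplicative.ofAdd (4 - v) *
      Multiplicative.ofAdd 4 = 1 := by decide
  have h2 : Multiplicative.ofAdd (4 : ZMod 8) * Multiplicative.ofAdd (4 : ZMod 8) = 1 := by decide
  have h2p : (Multiplicative.ofAdd (4 : ZMod 8)) ^ 2 = 1 := by
    rw [pow_two]; exact h2
  intro r hr
  rcases hr with h | h | h | h <;> subst h <;>
    simp [map_mul, map_pow, fS288, hprod, h8, h2, h2p]

noncomputable def φS288 (u : ZMod 8) : PresentedGroup relsS288 →* Multiplicative (ZMod 8) :=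
  PresentedGroup.toGroup (fS288_rels u)

@[simp] lemma φS288_of (u : ZMod 8) (i : Fin 3) :
    φS288 u (PresentedGroup.of i) = fS288 u i := PresentedGroup.toGroup.of _

lemma φS288_of0 (u : ZMod 8) : φS288 u (PresentedGroup.of 0) = Multiplicative.ofAdd u := by
  simp [fS288]

lemma φS288_of1 (u : ZMod 8) : φS288 u (PresentedGroup.of 1) = Multiplicative.ofAdd (4 - u) := by
  simp [fS288]

lemma φS288_of2 (u : ZMod 8) : φS288 u (PresentedGroup.of 2) = Multiplicative.ofAdd 4 := by
  simp [fS288]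

lemma φS288_surj (u : ZMod 8) (hu : u * u = 1) : Function.Surjective (φS288 u) := by
  intro y
  refine ⟨(PresentedGroup.of 0) ^ ((Multiplicative.toAdd y * u).val), ?_⟩
  rw [map_pow, φS288_of0, ← ofAdd_nsmul, nsmul_eq_mul]
  have hv : (((Multiplicative.toAdd y * u).val : ℕ) : ZMod 8) = Multiplicative.toAdd y * u := by
    simp [ZMod.natCast_val, ZMod.cast_id]
  rw [hv, mul_assoc, hu, mul_one]
  exact ofAdd_toAdd y

lemma key (φ : PresentedGroup relsS288 →* Multiplicative (ZMod 8))
    (hs : Function.Surjective φ) (ho : orderOf (φ (PresentedGroup.of 2)) = 2) :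
    ∃ A ∈ ({1,3,5,7} : Set (ZMod 8)),
      φ (PresentedGroup.of 0) = Multiplicative.ofAdd A ∧
      φ (PresentedGroup.of 1) = Multiplicative.ofAdd (4 - A) ∧
      φ (PresentedGroup.of 2) = Multiplicative.ofAdd 4 := by
  obtain ⟨A, hA⟩ : ∃ A, φ (PresentedGroup.of 0) = Multiplicative.ofAdd A :=
    ⟨_, (ofAdd_toAdd _).symm⟩
  obtain ⟨B, hB⟩ : ∃ B, φ (PresentedGroup.of 1) = Multiplicative.ofAdd B :=
    ⟨_, (ofAdd_toAdd _).symm⟩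
  obtain ⟨X, hX⟩ : ∃ X, φ (PresentedGroup.of 2) = Multiplicative.ofAdd X :=
    ⟨_, (ofAdd_toAdd _).symm⟩
  have hsum : A + B + X = 0 := by
    have h := congrArg φ rel1
    rw [map_mul, map_mul, map_one, hA, hB, hX] at h
    have := congrArg Multiplicative.toAdd h
    simpa using this
  have h2X : X + X = 0 := by
    have h := congrArg φ rel2
    rw [map_pow, map_one, hX] at h
    have := congrArg Multiplicative.toAdd h
    simpa [pow_two] using this
  have hXne : X ≠ 0 := by
    intro h
    rw [h] at hX
    rw [hX] at ho
    simp at ho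
  have d1 : ∀ X : ZMod 8, X + X = 0 → X ≠ 0 → X = 4 := by decide
  have d2 : ∀ A B : ZMod 8, A + B + 4 = 0 → B = 4 - A := by decide
  have hX4 : X = 4 := d1 X h2X hXne
  have hB4 : B = 4 - A := d2 A B (by rw [← hX4]; exact hsum)
  have hodd : ¬ ∃ c : ZMod 8, A = 2 * c := by
    rintro ⟨c, hc⟩
    set M : Subgroup (Multiplicative (ZMod 8)) :=
      Subgroup.zpowers (Multiplicative.ofAdd (2 : ZMod 8)) with hM
    have hmem : ∀ v : ZMod 8, (∃ d : ZMod 8, v = 2 * d) → Multiplicative.ofAdd v ∈ M := by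
      rintro v ⟨d, hd⟩
      refine ⟨(d.val : ℤ), ?_⟩
      show Multiplicative.ofAdd (2 : ZMod 8) ^ ((d.val : ℤ)) = Multiplicative.ofAdd v
      apply Multiplicative.toAdd.injective
      rw [toAdd_zpow, zsmul_eq_mul]
      have hdv : ((d.val : ℤ) : ZMod 8) = d := by
        push_cast
        simp [ZMod.natCast_val, ZMod.cast_id]
      simp only [toAdd_ofAdd, hdv, hd]
      ring
    have hall : ∀ g : PresentedGroup relsS288, g ∈ M.comap φ := by
      intro g
      refine PresentedGroup.generated_by _ _ ?_ g
      intro j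
      fin_cases j
      · exact Subgroup.mem_comap.mpr (hA ▸ hmem A ⟨c, hc⟩)
      · exact Subgroup.mem_comap.mpr (hB ▸ hmem B ⟨2 - c, by rw [hB4, hc]; ring⟩)
      · exact Subgroup.mem_comap.mpr (hX ▸ hmem X ⟨2, by rw [hX4]; norm_num⟩)
    obtain ⟨g, hg⟩ := hs (Multiplicative.ofAdd (1 : ZMod 8))
    have hm := hall g
    rw [Subgroup.mem_comap, hg, hM] at hm
    obtain ⟨k, hk⟩ := hm
    have hk2 : Multiplicative.ofAdd (2 : ZMod 8) ^ k = Multiplicative.ofAdd (1 : ZMod 8) := hk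
    have hk' : ((k : ℤ) : ZMod 8) * 2 = 1 := by
      have := congrArg Multiplicative.toAdd hk2
      rw [toAdd_zpow, zsmul_eq_mul, toAdd_ofAdd, toAdd_ofAdd] at this
      exact this
    revert hk'
    generalize ((k : ℤ) : ZMod 8) = y
    revert y; decide
  have d3 : ∀ A : ZMod 8, (¬ ∃ c : ZMod 8, A = 2 * c) → A ∈ ({1,3,5,7} : Set (ZMod 8)) := by
    decide
  have hAmem : A ∈ ({1,3,5,7} : Set (ZMod 8)) := d3 A hodd
  exact ⟨A, hAmem, hA, hB4 ▸ hB, hX4 ▸ hX⟩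


/-- For every surjective homomorphism `φ` from
`⟨a,b,x ∣ abx = 1, a⁸ = b⁸ = 1, x² = 1⟩` onto `ℤ/8ℤ` with `φ(x)` of additive
order `2`, there is a unit `k` of `ℤ/8ℤ` with
`(φ(a), φ(b), φ(x)) = (k, 3k, 4k)`; and there are exactly four such
homomorphisms, all equivalent up to an automorphism of `ℤ/8ℤ`. -/
theorem hom_S288_to_Z8 :
    (∀ φ : PresentedGroup relsS288 →* Multiplicative (ZMod 8),
      Function.Surjective φ → orderOf (φ (PresentedGroup.of 2)) = 2 →
        ∃ k : (ZMod 8)ˣ,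
          Multiplicative.toAdd (φ (PresentedGroup.of 0)) = (k : ZMod 8) ∧
          Multiplicative.toAdd (φ (PresentedGroup.of 1)) = 3 * (k : ZMod 8) ∧
          Multiplicative.toAdd (φ (PresentedGroup.of 2)) = 4 * (k : ZMod 8)) ∧
    {φ : PresentedGroup relsS288 →* Multiplicative (ZMod 8) |
        Function.Surjective φ ∧ orderOf (φ (PresentedGroup.of 2)) = 2}.ncard = 4 := by
  have hfacts : ∀ A : ZMod 8, A ∈ ({1,3,5,7} : Set (ZMod 8)) →
      A * A = 1 ∧ 4 - A = 3 * A ∧ (4 : ZMod 8) = 4 * A := by decide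
  constructor
  · intro φ hs ho
    obtain ⟨A, hAmem, hA, hB, hX⟩ := key φ hs ho
    obtain ⟨h1, h2, h3⟩ := hfacts _ hAmem
    refine ⟨⟨A, A, h1, h1⟩, ?_, ?_, ?_⟩
    · rw [hA]; rfl
    · rw [hB]; simpa using h2
    · rw [hX]; simpa using h3
  · have hset : {φ : PresentedGroup relsS288 →* Multiplicative (ZMod 8) |
        Function.Surjective φ ∧ orderOf (φ (PresentedGroup.of 2)) = 2} =
        φS288 '' ({1,3,5,7} : Set (ZMod 8)) := by
      ext φ
      constructor
      · rintro ⟨hs, ho⟩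
        obtain ⟨A, hAmem, hA, hB, hX⟩ := key φ hs ho
        refine ⟨A, hAmem, ?_⟩
        refine PresentedGroup.ext fun i => ?_
        fin_cases i
        · exact (φS288_of0 A).trans hA.symm
        · exact (φS288_of1 A).trans hB.symm
        · exact (φS288_of2 A).trans hX.symm
      · rintro ⟨u, hu, rfl⟩
        obtain ⟨h1, _, _⟩ := hfacts u hu
        refine ⟨φS288_surj u h1, ?_⟩
        rw [φS288_of2]
        exact orderOf_eq_prime (by decide) (by decide)
    rw [hset, Set.ncard_image_of_injective _ ?inj]
    · have he : ({1,3,5,7} : Set (ZMod 8)) = (({1,3,5,7} : Finset (ZMod 8)) : Set (ZMod 8)) := by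
        simp
      rw [he, Set.ncard_coe_finset]
      decide
    case inj =>
      intro u v h
      have h0 := congrArg (fun ψ => ψ (PresentedGroup.of 0)) h
      simp only [φS288_of0] at h0
      exact Multiplicative.ofAdd.injective h0
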